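/- Catalan's constant satisfies Ramanujan's formula G = (π/8)·log(2+√3) + (3/8)·∑_{k=0}^∞ 1/((2k+1)^2·C(2k,k)). -/

import Mathlib

/-!
With `Ti₂ x = ∑ (-1)^k x^(2k+1) / (2k+1)²` one has `G = Ti₂ 1` and `Ti₂' x = arctan x / x`.
Substituting `x = tan t` and integrating by parts gives
`Ti₂ (tan b) = b log (tan b) - ∫₀ᵇ log (tan t) dt` for `0 ≤ b ≤ π/4`, so `G = -∫₀^{π/4} log tan`.
The triplication formula `tan 3t = tan t · tan (π/3 - t) · tan (π/3 + t)` and the symmetry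
`log tan (π/2 - t) = -log tan t` give `∫₀^{π/12} log tan = (2/3) ∫₀^{π/4} log tan`; since
`tan (π/12) = 2 - √3`, this yields `Ti₂ (2 - √3) = (2/3) G - (π/12) log (2 + √3)`.

Both `∑ 1 / ((2k+1)² C(2k,k))` and `4 Ti₂ (2 - √3)` equal
`∫₀^{π/2} log ((2 + cos θ) / (2 - cos θ)) dθ`. For the first, expand the integrand as
`2 artanh (cos θ / 2)` and integrate the odd powers of `cos` by Wallis' formula. For the second,
`r = 2 - √3` satisfies `1 + r² = 4r`, so the integrand is `4 Re (artanh (r e^{iθ}))`, whose Fourier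
series `4 ∑ r^(2k+1) cos ((2k+1)θ) / (2k+1)` integrates term by term to `4 Ti₂ r`.
-/

open Real Filter Set Topology intervalIntegral
open MeasureTheory (volume ae_of_all)

noncomputable def Ti₂ (x : ℝ) : ℝ := ∑' k : ℕ, (-1) ^ k * x ^ (2 * k + 1) / (2 * k + 1) ^ 2

lemma Ti₂_zero : Ti₂ 0 = 0 := by
  simp [Ti₂]

lemma summable_one_div_two_mul_add_one_sq :
    Summable fun k : ℕ => 1 / (2 * (k : ℝ) + 1) ^ 2 := by
  refine ((summable_nat_add_iff 1).2 (summable_one_div_nat_pow.2 one_lt_two)).of_nonneg_of_le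
    (fun k => by positivity) fun k => ?_
  gcongr
  push_cast
  linarith

lemma norm_Ti₂_term_le {x : ℝ} (hx : |x| ≤ 1) (k : ℕ) :
    ‖(-1) ^ k * x ^ (2 * k + 1) / (2 * (k : ℝ) + 1) ^ 2‖ ≤ 1 / (2 * (k : ℝ) + 1) ^ 2 := by
  rw [norm_div, norm_mul, norm_pow, norm_neg, norm_one, one_pow, one_mul, norm_pow,
    Real.norm_eq_abs, Real.norm_of_nonneg (by positivity)]
  gcongr
  exact pow_le_one₀ (abs_nonneg x) hx

lemma hasSum_Ti₂ {x : ℝ} (hx : |x| ≤ 1) :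
    HasSum (fun k : ℕ => (-1) ^ k * x ^ (2 * k + 1) / (2 * (k : ℝ) + 1) ^ 2) (Ti₂ x) :=
  (summable_one_div_two_mul_add_one_sq.of_norm_bounded (norm_Ti₂_term_le hx)).hasSum

lemma continuousOn_Ti₂ : ContinuousOn Ti₂ (Icc (-1) 1) :=
  continuousOn_tsum (fun k => by fun_prop) summable_one_div_two_mul_add_one_sq
    fun k _ hx => norm_Ti₂_term_le (abs_le.2 hx) k

lemma hasDerivAt_Ti₂ {x : ℝ} (hx : |x| < 1) :
    HasDerivAt Ti₂ (∑' k : ℕ, (-1) ^ k * x ^ (2 * k) / (2 * k + 1)) x := by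
  obtain ⟨R, hxR, hR1⟩ := exists_between hx
  have hR0 : 0 < R := (abs_nonneg x).trans_lt hxR
  refine hasDerivAt_tsum_of_isPreconnected (u := fun k => (R ^ 2) ^ k)
    (g := fun (k : ℕ) (y : ℝ) => (-1) ^ k * y ^ (2 * k + 1) / (2 * (k : ℝ) + 1) ^ 2)
    (g' := fun (k : ℕ) (y : ℝ) => (-1) ^ k * y ^ (2 * k) / (2 * (k : ℝ) + 1))
    (summable_geometric_of_lt_one (by positivity) (by nlinarith)) isOpen_Ioo
    isPreconnected_Ioo (fun k y _ => ?_) (fun k y hy => ?_) (y₀ := 0) ⟨by linarith, hR0⟩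
    (by simp) (abs_lt.1 hxR)
  · refine (((hasDerivAt_pow (2 * k + 1) y).const_mul ((-1 : ℝ) ^ k)).div_const
      ((2 * (k : ℝ) + 1) ^ 2)).congr_deriv ?_
    rw [Nat.add_sub_cancel]
    field_simp
    push_cast
    ring
  · have hk : 1 ≤ 2 * (k : ℝ) + 1 := by linarith [k.cast_nonneg (α := ℝ)]
    rw [norm_div, norm_mul, norm_pow, norm_neg, norm_one, one_pow, one_mul, norm_pow,
      Real.norm_eq_abs, Real.norm_of_nonneg (by positivity), ← pow_mul, div_le_iff₀ (by positivity)]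
    calc |y| ^ (2 * k) ≤ R ^ (2 * k) :=
          pow_le_pow_left₀ (abs_nonneg y) (abs_le.2 ⟨hy.1.le, hy.2.le⟩) _
      _ ≤ R ^ (2 * k) * (2 * k + 1) := le_mul_of_one_le_right (by positivity) hk

lemma mul_tsum_eq_arctan {x : ℝ} (hx : |x| < 1) :
    x * ∑' k : ℕ, (-1) ^ k * x ^ (2 * k) / (2 * k + 1) = arctan x := by
  rw [← tsum_mul_left, ← (hasSum_arctan (by simpa using hx)).tsum_eq]
  congr 1 with k
  push_cast
  ring

lemma tan_lt_one {t : ℝ} (h0 : -(π / 2) < t) (h : t < π / 4) : tan t < 1 := by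
  simpa using tan_lt_tan_of_lt_of_lt_pi_div_two h0 (by linarith [pi_pos]) h

lemma tan_mem_Icc_zero_one {t : ℝ} (h0 : 0 ≤ t) (h : t ≤ π / 4) : tan t ∈ Icc 0 1 := by
  have hπ := pi_pos
  refine ⟨tan_nonneg_of_nonneg_of_le_pi_div_two h0 (by linarith), ?_⟩
  rcases h.lt_or_eq with h | rfl
  · exact (tan_lt_one (by linarith) h).le
  · simp

lemma tan_three_mul (t : ℝ) : tan (3 * t) = tan t * tan (π / 3 - t) * tan (π / 3 + t) := by
  have h3 : √3 ^ 2 = 3 := sq_sqrt (by norm_num)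
  have hsc := sin_sq_add_cos_sq t
  have hsin : sin (3 * t) = 4 * sin t * sin (π / 3 - t) * sin (π / 3 + t) := by
    rw [sin_three_mul, sin_sub, sin_add, sin_pi_div_three, cos_pi_div_three]
    linear_combination (-3 * sin t) * hsc + (-sin t * cos t ^ 2) * h3
  have hcos : cos (3 * t) = 4 * cos t * cos (π / 3 - t) * cos (π / 3 + t) := by
    rw [cos_three_mul, cos_sub, cos_add, sin_pi_div_three, cos_pi_div_three]
    linear_combination (3 * cos t) * hsc + (cos t * sin t ^ 2) * h3
  simp only [tan_eq_sin_div_cos, hsin, hcos, mul_div_mul_comm]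
  norm_num

lemma one_lt_sqrt_three : 1 < √3 :=
  (lt_sqrt zero_le_one).2 (by norm_num)

lemma sqrt_three_lt_two : √3 < 2 :=
  (sqrt_lt' two_pos).2 (by norm_num)

lemma tan_pi_div_twelve : tan (π / 12) = 2 - √3 := by
  have hπ := pi_pos
  have hu0 := tan_pos_of_pos_of_lt_pi_div_two (x := π / 12) (by positivity) (by linarith)
  have hu1 := tan_lt_one (t := π / 12) (by linarith) (by linarith)
  have h := tan_two_mul (x := π / 12)
  rw [show 2 * (π / 12) = π / 6 by ring, tan_pi_div_six,
    div_eq_div_iff (by positivity) (by nlinarith)] at h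
  nlinarith [sq_sqrt (show (0 : ℝ) ≤ 3 by norm_num), sqrt_nonneg 3]

lemma log_two_sub_sqrt_three : log (2 - √3) = -log (2 + √3) := by
  rw [← log_inv]
  congr 1
  refine eq_inv_of_mul_eq_one_left ?_
  linear_combination -sq_sqrt (show (0 : ℝ) ≤ 3 by norm_num)

lemma intervalIntegrable_log_tan (a b : ℝ) :
    IntervalIntegrable (fun t => log (tan t)) volume a b := by
  have h : (fun t => log (tan t)) = log ∘ fun t => sin t / cos t := by
    ext t
    simp [tan_eq_sin_div_cos]
  rw [h]
  exact (analyticOnNhd_sin.meromorphicOn.div analyticOnNhd_cos.meromorphicOn).intervalIntegrable_log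

lemma continuousWithinAt_mul_log_tan_zero :
    ContinuousWithinAt (fun t => t * log (tan t)) (Ici 0) 0 := by
  rw [← continuousWithinAt_Ioi_iff_Ici, ContinuousWithinAt, zero_mul]
  have hmul_log : Tendsto (fun t => t * log t) (𝓝[>] 0) (𝓝 0) := by
    simpa using (continuous_mul_log.tendsto 0).mono_left nhdsWithin_le_nhds
  refine tendsto_of_tendsto_of_tendsto_of_le_of_le' hmul_log tendsto_const_nhds ?_ ?_
  all_goals
    filter_upwards [Ioo_mem_nhdsGT (show (0 : ℝ) < π / 4 by positivity)] with t ht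
    have htan := tan_mem_Icc_zero_one ht.1.le ht.2.le
  · have := le_tan ht.1.le (by linarith [ht.2, pi_pos])
    exact mul_le_mul_of_nonneg_left (log_le_log ht.1 this) ht.1.le
  · exact mul_nonpos_of_nonneg_of_nonpos ht.1.le (log_nonpos htan.1 htan.2)

lemma log_tan_pi_div_two_sub (x : ℝ) : log (tan (π / 2 - x)) = -log (tan x) := by
  rw [tan_pi_div_two_sub, log_inv]

lemma integral_log_tan_pi_div_two_sub (a b : ℝ) :
    ∫ x in π / 2 - b..π / 2 - a, log (tan x) = -∫ x in a..b, log (tan x) := by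
  rw [← integral_comp_sub_left (fun x => log (tan x)), ← integral_neg]
  simp only [log_tan_pi_div_two_sub]

lemma log_tan_three_mul {t : ℝ} (h0 : 0 < t) (h : t < π / 6) :
    log (tan (3 * t)) = log (tan t) + log (tan (π / 3 - t)) + log (tan (π / 3 + t)) := by
  have hπ := pi_pos
  have h1 := tan_pos_of_pos_of_lt_pi_div_two h0 (by linarith)
  have h2 := tan_pos_of_pos_of_lt_pi_div_two (x := π / 3 - t) (by linarith) (by linarith)
  have h3 := tan_pos_of_pos_of_lt_pi_div_two (x := π / 3 + t) (by linarith) (by linarith)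
  rw [tan_three_mul, log_mul (by positivity) h3.ne', log_mul h1.ne' h2.ne']

lemma integral_log_tan_pi_div_twelve :
    ∫ t in 0..π / 12, log (tan t) = 2 / 3 * ∫ t in 0..π / 4, log (tan t) := by
  have hπ := pi_pos
  have hint := intervalIntegrable_log_tan
  have hint_sub : IntervalIntegrable (fun t => log (tan (π / 3 - t))) volume 0 (π / 12) := by
    simpa only [sub_sub_cancel] using (hint (π / 3 - 0) (π / 3 - π / 12)).comp_sub_left (π / 3)
  have hint_add : IntervalIntegrable (fun t => log (tan (π / 3 + t))) volume 0 (π / 12) := by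
    simpa only [add_sub_cancel_left] using
      (hint (π / 3 + 0) (π / 3 + π / 12)).comp_add_left (π / 3)
  have hmul : ∫ t in 0..π / 12, log (tan (3 * t)) = 1 / 3 * ∫ t in 0..π / 4, log (tan t) := by
    rw [integral_comp_mul_left (fun t => log (tan t)) three_ne_zero, smul_eq_mul, mul_zero,
      show 3 * (π / 12) = π / 4 by ring, inv_eq_one_div]
  have hsplit : ∫ t in 0..π / 12, log (tan (3 * t)) = (∫ t in 0..π / 12, log (tan t)) +
      (∫ t in 0..π / 12, log (tan (π / 3 - t))) + ∫ t in 0..π / 12, log (tan (π / 3 + t)) := by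
    rw [← integral_add (hint 0 _) hint_sub, ← integral_add ((hint 0 _).add hint_sub) hint_add]
    refine integral_congr_ae (ae_of_all _ fun t ht => ?_)
    rw [uIoc_of_le (by positivity)] at ht
    exact log_tan_three_mul ht.1 (by linarith [ht.2])
  have hsub : ∫ t in 0..π / 12, log (tan (π / 3 - t)) = -∫ t in π / 6..π / 4, log (tan t) := by
    rw [integral_comp_sub_left (fun t => log (tan t)), show π / 3 - π / 12 = π / 2 - π / 4 by ring,
      show π / 3 - 0 = π / 2 - π / 6 by ring, integral_log_tan_pi_div_two_sub]
  have hadd : ∫ t in 0..π / 12, log (tan (π / 3 + t)) = -∫ t in π / 12..π / 6, log (tan t) := by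
    rw [integral_comp_add_left (fun t => log (tan t)), show π / 3 + π / 12 = π / 2 - π / 12 by ring,
      show π / 3 + 0 = π / 2 - π / 6 by ring, integral_log_tan_pi_div_two_sub]
  have h1 := integral_add_adjacent_intervals (hint 0 (π / 12)) (hint (π / 12) (π / 6))
  have h2 := integral_add_adjacent_intervals (hint 0 (π / 6)) (hint (π / 6) (π / 4))
  linarith

lemma continuousOn_Ti₂_tan_sub_mul_log_tan :
    ContinuousOn (fun t => Ti₂ (tan t) - t * log (tan t)) (Icc 0 (π / 4)) := by
  have hπ := pi_pos
  have htan : ∀ t ∈ Icc 0 (π / 4), ContinuousAt tan t := fun t ht =>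
    continuousAt_tan.2 (cos_pos_of_mem_Ioo ⟨by linarith [ht.1], by linarith [ht.2]⟩).ne'
  refine (continuousOn_Ti₂.comp (fun t ht => (htan t ht).continuousWithinAt) fun t ht => ?_).sub
    fun t ht => ?_
  · exact Icc_subset_Icc_left (by norm_num) (tan_mem_Icc_zero_one ht.1 ht.2)
  rcases ht.1.eq_or_lt with rfl | ht0
  · exact continuousWithinAt_mul_log_tan_zero.mono fun s hs => hs.1
  · have := tan_pos_of_pos_of_lt_pi_div_two ht0 (by linarith [ht.2])
    exact (continuousAt_id.mul ((continuousAt_log this.ne').comp (htan t ht))).continuousWithinAt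

lemma hasDerivAt_Ti₂_tan_sub_mul_log_tan {t : ℝ} (h0 : 0 < t) (h : t < π / 4) :
    HasDerivAt (fun t => Ti₂ (tan t) - t * log (tan t)) (-log (tan t)) t := by
  have hπ := pi_pos
  have hcos : cos t ≠ 0 := (cos_pos_of_mem_Ioo ⟨by linarith, by linarith⟩).ne'
  have htan : 0 < tan t := tan_pos_of_pos_of_lt_pi_div_two h0 (by linarith)
  have habs : |tan t| < 1 := abs_lt.2 ⟨by linarith, tan_lt_one (by linarith) h⟩
  have hd := hasDerivAt_tan hcos
  refine (((hasDerivAt_Ti₂ habs).comp t hd).sub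
    ((hasDerivAt_id t).mul ((hasDerivAt_log htan.ne').comp t hd))).congr_deriv ?_
  have hS := mul_tsum_eq_arctan habs
  rw [arctan_tan (by linarith) (by linarith), mul_comm, ← eq_div_iff htan.ne'] at hS
  simp only [hS, Function.comp_apply, id]
  field_simp
  ring

lemma Ti₂_tan_eq {b : ℝ} (hb0 : 0 ≤ b) (hb : b ≤ π / 4) :
    Ti₂ (tan b) = b * log (tan b) - ∫ t in 0..b, log (tan t) := by
  have h := integral_eq_sub_of_hasDerivAt_of_le hb0
    (continuousOn_Ti₂_tan_sub_mul_log_tan.mono (Icc_subset_Icc_right hb))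
    (fun t ht => hasDerivAt_Ti₂_tan_sub_mul_log_tan ht.1 (ht.2.trans_le hb))
    (intervalIntegrable_log_tan 0 b).neg
  simp only [integral_neg, tan_zero, Ti₂_zero, zero_mul, sub_zero] at h
  linarith

lemma Ti₂_one : Ti₂ 1 = -∫ t in 0..π / 4, log (tan t) := by
  simpa using Ti₂_tan_eq (b := π / 4) (by positivity) le_rfl

lemma Ti₂_two_sub_sqrt_three : Ti₂ (2 - √3) = 2 / 3 * Ti₂ 1 - π / 12 * log (2 + √3) := by
  rw [← tan_pi_div_twelve, Ti₂_tan_eq (by positivity) (by linarith [pi_pos]),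
    integral_log_tan_pi_div_twelve, Ti₂_one, tan_pi_div_twelve, log_two_sub_sqrt_three]
  ring

lemma hasSum_intervalIntegral_of_norm_le {E : Type*} [NormedAddCommGroup E] [NormedSpace ℝ E]
    {f : ℕ → ℝ → E} {g : ℝ → E} {u : ℕ → ℝ} (hf : ∀ k, Continuous (f k))
    (hfu : ∀ k x, ‖f k x‖ ≤ u k) (hu : Summable u) (hg : ∀ x, HasSum (fun k => f k x) (g x))
    (a b : ℝ) : HasSum (fun k => ∫ x in a..b, f k x) (∫ x in a..b, g x) :=
  hasSum_integral_of_dominated_convergence (fun k _ => u k) (fun k => (hf k).aestronglyMeasurable)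
    (fun k => ae_of_all _ fun x _ => hfu k x) (ae_of_all _ fun _ _ => hu) intervalIntegrable_const
    (ae_of_all _ fun x _ => hg x)

lemma integral_cos_pow_two_mul_add_one (k : ℕ) :
    ∫ x in 0..π / 2, cos x ^ (2 * k + 1) = 4 ^ k / ((2 * k + 1) * k.centralBinom) := by
  induction k with
  | zero => simp
  | succ k ih =>
    have hC : ((k + 1).centralBinom : ℝ) = 2 * (2 * k + 1) * k.centralBinom / (k + 1) := by
      rw [eq_div_iff (by positivity), mul_comm]
      exact_mod_cast Nat.succ_mul_centralBinom_succ k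
    have hC0 : (k.centralBinom : ℝ) ≠ 0 := Nat.cast_ne_zero.2 k.centralBinom_ne_zero
    rw [show 2 * (k + 1) + 1 = 2 * k + 1 + 2 by ring, integral_cos_pow, ih, hC, cos_pi_div_two,
      sin_zero, zero_pow (by omega), zero_mul, mul_zero, sub_zero, zero_div, zero_add]
    push_cast
    field_simp
    ring

lemma hasSum_log_two_add_cos_sub_log_two_sub_cos (θ : ℝ) :
    HasSum (fun k : ℕ => 2 * (1 / (2 * k + 1)) * (cos θ / 2) ^ (2 * k + 1))
      (log (2 + cos θ) - log (2 - cos θ)) := by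
  have hc := abs_le.1 (abs_cos_le_one θ)
  convert hasSum_log_sub_log_of_abs_lt_one (x := cos θ / 2)
    (by rw [abs_div, abs_two]; linarith [abs_cos_le_one θ]) using 1
  rw [show 2 + cos θ = 2 * (1 + cos θ / 2) by ring, show 2 - cos θ = 2 * (1 - cos θ / 2) by ring,
    log_mul two_ne_zero (by linarith), log_mul two_ne_zero (by linarith)]
  ring

lemma norm_two_mul_div_mul_cos_div_two_pow_le (k : ℕ) (θ : ℝ) :
    ‖2 * (1 / (2 * (k : ℝ) + 1)) * (cos θ / 2) ^ (2 * k + 1)‖ ≤ (1 / 4) ^ k := by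
  have hk : 1 ≤ 2 * (k : ℝ) + 1 := by linarith [k.cast_nonneg (α := ℝ)]
  have hcos : ‖cos θ / 2‖ ≤ 1 / 2 := by
    rw [norm_div, Real.norm_two]
    gcongr
    exact abs_cos_le_one θ
  calc ‖2 * (1 / (2 * (k : ℝ) + 1)) * (cos θ / 2) ^ (2 * k + 1)‖
      ≤ 2 * 1 * (1 / 2) ^ (2 * k + 1) := by
        rw [norm_mul, norm_mul, norm_pow, Real.norm_two, Real.norm_of_nonneg (by positivity)]
        gcongr
        exact div_le_one_of_le₀ hk (by positivity)
    _ = (1 / 4) ^ k := by rw [pow_succ, pow_mul]; ring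

lemma integral_two_mul_div_mul_cos_div_two_pow (k : ℕ) :
    ∫ θ in 0..π / 2, 2 * (1 / (2 * (k : ℝ) + 1)) * (cos θ / 2) ^ (2 * k + 1) =
      1 / ((2 * k + 1) ^ 2 * k.centralBinom) := by
  simp_rw [div_pow, ← mul_div_assoc, mul_div_right_comm _ (cos _ ^ _), integral_const_mul,
    integral_cos_pow_two_mul_add_one, pow_succ, pow_mul]
  have hC0 : (k.centralBinom : ℝ) ≠ 0 := Nat.cast_ne_zero.2 k.centralBinom_ne_zero
  field_simp
  norm_num

lemma hasSum_one_div_sq_mul_centralBinom :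
    HasSum (fun k : ℕ => 1 / ((2 * k + 1) ^ 2 * (k.centralBinom : ℝ)))
      (∫ θ in 0..π / 2, (log (2 + cos θ) - log (2 - cos θ))) := by
  simpa only [integral_two_mul_div_mul_cos_div_two_pow] using
    hasSum_intervalIntegral_of_norm_le (fun k => by fun_prop)
      norm_two_mul_div_mul_cos_div_two_pow_le
      (summable_geometric_of_lt_one (by norm_num) (by norm_num))
      hasSum_log_two_add_cos_sub_log_two_sub_cos 0 (π / 2)

lemma Complex.hasSum_log_sub_log_of_norm_lt_one {z : ℂ} (hz : ‖z‖ < 1) :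
    HasSum (fun k : ℕ => 2 * z ^ (2 * k + 1) / (2 * k + 1)) (log (1 + z) - log (1 - z)) := by
  have h := (hasSum_taylorSeries_neg_log hz).sub
    (hasSum_taylorSeries_neg_log (z := -z) (by rwa [norm_neg]))
  rw [sub_neg_eq_add, neg_add_eq_sub, sub_neg_eq_add] at h
  have hodd : Function.Injective fun k : ℕ => 2 * k + 1 := fun a b hab => by simpa using hab
  rw [← hodd.hasSum_iff] at h
  · refine h.congr_fun fun k => ?_
    simp only [Function.comp_apply, Odd.neg_pow ⟨k, rfl⟩]
    push_cast
    ring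
  · rintro n hn
    have heven : Even n := Nat.not_odd_iff_even.1 fun ⟨k, hk⟩ => hn ⟨k, hk.symm⟩
    simp [heven.neg_pow]

lemma norm_one_add_ofReal_mul_exp_sq (r θ : ℝ) :
    ‖1 + r * Complex.exp (θ * Complex.I)‖ ^ 2 = 1 + 2 * r * cos θ + r ^ 2 := by
  rw [Complex.sq_norm, Complex.normSq_apply]
  simp only [Complex.add_re, Complex.add_im, Complex.one_re, Complex.one_im,
    Complex.re_ofReal_mul, Complex.im_ofReal_mul, Complex.exp_ofReal_mul_I_re,
    Complex.exp_ofReal_mul_I_im]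
  linear_combination r ^ 2 * sin_sq_add_cos_sq θ

lemma hasSum_pow_mul_cos_odd_div {r : ℝ} (hr : |r| < 1) (θ : ℝ) :
    HasSum (fun k : ℕ => 4 * r ^ (2 * k + 1) * cos ((2 * k + 1) * θ) / (2 * k + 1))
      (log (1 + 2 * r * cos θ + r ^ 2) - log (1 - 2 * r * cos θ + r ^ 2)) := by
  set w : ℂ := r * Complex.exp (θ * Complex.I)
  have hw : ‖w‖ < 1 := by simpa [w, Complex.norm_exp_ofReal_mul_I] using hr
  have h := Complex.hasSum_re ((Complex.hasSum_log_sub_log_of_norm_lt_one hw).mul_left 2)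
  have hterm (k : ℕ) : 2 * (2 * w ^ (2 * k + 1) / (2 * k + 1)) =
      ((4 * r ^ (2 * k + 1) / (2 * k + 1) : ℝ) : ℂ) *
        Complex.exp (((2 * k + 1) * θ : ℝ) * Complex.I) := by
    simp only [w, mul_pow, ← Complex.exp_nat_mul]
    push_cast
    ring_nf
  have hval : (2 * (Complex.log (1 + w) - Complex.log (1 - w))).re =
      log (1 + 2 * r * cos θ + r ^ 2) - log (1 - 2 * r * cos θ + r ^ 2) := by
    have h1 := norm_one_add_ofReal_mul_exp_sq r θ
    have h2 := norm_one_add_ofReal_mul_exp_sq (-r) θ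
    rw [Complex.ofReal_neg, neg_mul, ← sub_eq_add_neg] at h2
    rw [show 1 - 2 * r * cos θ + r ^ 2 = 1 + 2 * -r * cos θ + (-r) ^ 2 by ring, ← h1, ← h2,
      log_pow, log_pow]
    simp [w, Complex.log_re]
    ring
  simp only [hterm, Complex.re_ofReal_mul, Complex.exp_ofReal_mul_I_re, hval] at h
  convert h using 2 with k
  ring

lemma hasSum_log_two_add_cos_sub_log_two_sub_cos_fourier (θ : ℝ) :
    HasSum (fun k : ℕ => 4 * (2 - √3) ^ (2 * k + 1) * cos ((2 * k + 1) * θ) / (2 * k + 1))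
      (log (2 + cos θ) - log (2 - cos θ)) := by
  have h3 : √3 ^ 2 = 3 := sq_sqrt (by norm_num)
  have hlt := sqrt_three_lt_two
  have hgt := one_lt_sqrt_three
  have hc := abs_le.1 (abs_cos_le_one θ)
  convert hasSum_pow_mul_cos_odd_div (r := 2 - √3) (abs_lt.2 ⟨by linarith, by linarith⟩) θ
    using 1
  rw [show 1 + 2 * (2 - √3) * cos θ + (2 - √3) ^ 2 = 2 * (2 - √3) * (2 + cos θ) by
      linear_combination h3,
    show 1 - 2 * (2 - √3) * cos θ + (2 - √3) ^ 2 = 2 * (2 - √3) * (2 - cos θ) by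
      linear_combination h3,
    log_mul (x := 2 * (2 - √3)) (by nlinarith) (by linarith),
    log_mul (x := 2 * (2 - √3)) (by nlinarith) (by linarith)]
  ring

lemma integral_cos_two_mul_add_one_mul (k : ℕ) :
    ∫ θ in 0..π / 2, cos ((2 * k + 1) * θ) = (-1) ^ k / (2 * k + 1) := by
  rw [integral_comp_mul_left (fun θ => cos θ) (by positivity), integral_cos,
    show (2 * k + 1) * (π / 2) = π / 2 + k * π by ring, sin_add_nat_mul_pi, sin_pi_div_two,
    mul_zero, sin_zero, sub_zero, mul_one, smul_eq_mul, inv_mul_eq_div]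

lemma integral_log_two_add_cos_sub_log_two_sub_cos :
    ∫ θ in 0..π / 2, (log (2 + cos θ) - log (2 - cos θ)) = 4 * Ti₂ (2 - √3) := by
  have hr0 : 0 ≤ 2 - √3 := by linarith [sqrt_three_lt_two]
  have hr1 : 2 - √3 < 1 := by linarith [one_lt_sqrt_three]
  set r := 2 - √3
  have hbound (k : ℕ) (θ : ℝ) :
      ‖4 * r ^ (2 * k + 1) * cos ((2 * k + 1) * θ) / (2 * k + 1)‖ ≤ 4 * r ^ k := by
    have hk : 1 ≤ 2 * (k : ℝ) + 1 := by linarith [k.cast_nonneg (α := ℝ)]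
    rw [norm_div, norm_mul, norm_mul, Real.norm_of_nonneg (by positivity : (0 : ℝ) ≤ 4),
      Real.norm_of_nonneg (by positivity : 0 ≤ r ^ (2 * k + 1)),
      Real.norm_of_nonneg (by positivity : (0 : ℝ) ≤ 2 * k + 1), div_le_iff₀ (by positivity)]
    calc 4 * r ^ (2 * k + 1) * ‖cos ((2 * k + 1) * θ)‖ ≤ 4 * r ^ k * 1 := by
          refine mul_le_mul (mul_le_mul_of_nonneg_left ?_ (by norm_num)) (abs_cos_le_one _)
            (norm_nonneg _) (by positivity)
          exact pow_le_pow_of_le_one hr0 hr1.le (by omega)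
      _ ≤ 4 * r ^ k * (2 * k + 1) := by gcongr
  have hterm (k : ℕ) :
      ∫ θ in 0..π / 2, 4 * r ^ (2 * k + 1) * cos ((2 * k + 1) * θ) / (2 * k + 1) =
        4 * ((-1) ^ k * r ^ (2 * k + 1) / (2 * k + 1) ^ 2) := by
    simp_rw [mul_div_right_comm _ (cos _), integral_const_mul, integral_cos_two_mul_add_one_mul]
    field_simp
  have h := hasSum_intervalIntegral_of_norm_le (fun k => by fun_prop) hbound
    ((summable_geometric_of_lt_one hr0 hr1).mul_left 4)
    hasSum_log_two_add_cos_sub_log_two_sub_cos_fourier 0 (π / 2)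
  simp only [hterm] at h
  exact h.unique ((hasSum_Ti₂ (abs_le.2 ⟨by linarith, hr1.le⟩)).mul_left 4)

theorem stmt12 :
    (∑' k : ℕ, (-1 : ℝ) ^ k / (2 * k + 1) ^ 2) =
      (π / 8) * Real.log (2 + Real.sqrt 3) +
        (3 / 8) * ∑' k : ℕ,
          1 / ((2 * k + 1) ^ 2 * (Nat.choose (2 * k) k : ℝ)) := by
  have hG : ∑' k : ℕ, (-1 : ℝ) ^ k / (2 * k + 1) ^ 2 = Ti₂ 1 := by
    simp [Ti₂]
  have hS : ∑' k : ℕ, 1 / ((2 * k + 1) ^ 2 * (Nat.choose (2 * k) k : ℝ)) =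
      4 * Ti₂ (2 - √3) := by
    simp_rw [← Nat.centralBinom_eq_two_mul_choose]
    rw [hasSum_one_div_sq_mul_centralBinom.tsum_eq, integral_log_two_add_cos_sub_log_two_sub_cos]
  rw [hG, hS, Ti₂_two_sub_sqrt_three]
  ring
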